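/- Let g : ℝᵈ → ℝ ∪ {+∞} be convex and P ⊆ effdom(g) a convex set. If g is not strictly convex on P, then there exist two distinct points of P sharing a common extended subgradient. Conversely, if a linear extended f is an extended subgradient of g at two distinct points a, c ∈ P, then g is not strictly convex on P: indeed g(ρa + (1-ρ)c) = ρg(a) + (1-ρ)g(c) for all 0 < ρ < 1. -/

import Mathlib

/-!
An extended subgradient exists at every point `x₀` of the effective domain, by induction on the
dimension. Either the epigraph has a non-vertical supporting hyperplane at `(x₀, g x₀)`, which is
an ordinary linear subgradient, or the effective domain lies in a half-space
`{x | ℓ (x - x₀) ≤ 0}` with `ℓ ≠ 0`. In the second case a subgradient of `g` restricted to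
`x₀ + ker ℓ`, extended by `⊤` on `{ℓ > 0}` and by `⊥` on `{ℓ < 0}`, is a subgradient of `g`.

If `g` is affine on the segment from `a` to `c` and `m = ρ • a + (1 - ρ) • c`, a subgradient `f`
at `m` is finite in the direction `a - c`, and the subgradient inequalities from `m` to `a` and
to `c` have a `ρ, 1 - ρ` combination that is an equality; so both are equalities, and `f` is a
subgradient at `a` and `c`. Conversely, a common subgradient at `a` and `c` yields the reverse of
the convexity inequality at `m`.
-/

/-- A *linear extended function*: scaling and additivity whenever the sum is legal. -/
def IsLinExt {E : Type*} [AddCommGroup E] [Module ℝ E] (f : E → EReal) : Prop :=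
  (∀ (α : ℝ) (x : E), f (α • x) = (α : EReal) * f x) ∧
  (∀ x x' : E, ¬ ((f x = ⊤ ∧ f x' = ⊥) ∨ (f x = ⊥ ∧ f x' = ⊤)) →
    f (x + x') = f x + f x')

/-- An *affine extended function*: a horizontally and vertically shifted linear extended fn. -/
def IsAffExt {E : Type*} [AddCommGroup E] [Module ℝ E] (h : E → EReal) : Prop :=
  ∃ (f : E → EReal) (x₀ : E) (β : ℝ), IsLinExt f ∧ ∀ x, h x = f (x - x₀) + (β : EReal)

section LinExt

variable {E : Type*} [AddCommGroup E] [Module ℝ E]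

theorem IsLinExt.map_zero {f : E → EReal} (hf : IsLinExt f) : f 0 = 0 := by
  simpa using hf.1 0 0

theorem isLinExt_coe_linearMap (ℓ : E →ₗ[ℝ] ℝ) : IsLinExt fun x => (ℓ x : EReal) :=
  ⟨fun α x => by simp, fun x x' _ => by simp⟩

-- `(ℓ x : EReal) * ⊤` is `⊤` where `ℓ x > 0` and `⊥` where `ℓ x < 0`.
noncomputable def kerExtend (ℓ : E →ₗ[ℝ] ℝ) (f₀ : LinearMap.ker ℓ → EReal) (x : E) : EReal :=
  if h : ℓ x = 0 then f₀ ⟨x, h⟩ else (ℓ x : EReal) * ⊤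

variable {ℓ : E →ₗ[ℝ] ℝ} {f₀ : LinearMap.ker ℓ → EReal}

theorem kerExtend_coe (v : LinearMap.ker ℓ) : kerExtend ℓ f₀ v = f₀ v := by
  simp [kerExtend]

theorem kerExtend_of_pos {x : E} (hx : 0 < ℓ x) : kerExtend ℓ f₀ x = ⊤ := by
  simp [kerExtend, hx.ne', EReal.coe_mul_top_of_pos hx]

theorem kerExtend_of_neg {x : E} (hx : ℓ x < 0) : kerExtend ℓ f₀ x = ⊥ := by
  simp [kerExtend, hx.ne, EReal.coe_mul_top_of_neg hx]

theorem isLinExt_kerExtend (hf₀ : IsLinExt f₀) : IsLinExt (kerExtend ℓ f₀) := by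
  refine ⟨fun α x => ?_, fun x x' hlegal => ?_⟩
  · by_cases hx : ℓ x = 0
    · obtain ⟨v, rfl⟩ : ∃ v : LinearMap.ker ℓ, (v : E) = x := ⟨⟨x, hx⟩, rfl⟩
      rw [← Submodule.coe_smul, kerExtend_coe, kerExtend_coe, hf₀.1]
    rcases eq_or_ne α 0 with rfl | hα
    · simpa using (kerExtend_coe (f₀ := f₀) 0).trans hf₀.map_zero
    have hαx : ℓ (α • x) ≠ 0 := by simp [hα, hx]
    rw [kerExtend, kerExtend, dif_neg hx, dif_neg hαx, map_smul, smul_eq_mul, EReal.coe_mul,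
      mul_assoc]
  · have hsum : ℓ (x + x') = ℓ x + ℓ x' := map_add ℓ x x'
    rcases lt_trichotomy (ℓ x) 0 with hx | hx | hx <;>
      rcases lt_trichotomy (ℓ x') 0 with hx' | hx' | hx'
    · rw [kerExtend_of_neg hx, kerExtend_of_neg hx', kerExtend_of_neg (by linarith), EReal.bot_add]
    · rw [kerExtend_of_neg hx, kerExtend_of_neg (by linarith), EReal.bot_add]
    · exact absurd (Or.inr ⟨kerExtend_of_neg hx, kerExtend_of_pos hx'⟩) hlegal
    · rw [kerExtend_of_neg hx', kerExtend_of_neg (by linarith), EReal.add_bot]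
    · obtain ⟨v, rfl⟩ : ∃ v : LinearMap.ker ℓ, (v : E) = x := ⟨⟨x, hx⟩, rfl⟩
      obtain ⟨v', rfl⟩ : ∃ v' : LinearMap.ker ℓ, (v' : E) = x' := ⟨⟨x', hx'⟩, rfl⟩
      simp only [← Submodule.coe_add, kerExtend_coe] at hlegal ⊢
      exact hf₀.2 v v' hlegal
    · rw [kerExtend_of_pos hx', kerExtend_of_pos (by linarith), EReal.add_top_of_ne_bot]
      exact fun h => hlegal (Or.inr ⟨h, kerExtend_of_pos hx'⟩)
    · exact absurd (Or.inl ⟨kerExtend_of_pos hx, kerExtend_of_neg hx'⟩) hlegal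
    · rw [kerExtend_of_pos hx, kerExtend_of_pos (by linarith), EReal.top_add_of_ne_bot]
      exact fun h => hlegal (Or.inl ⟨kerExtend_of_pos hx, h⟩)
    · rw [kerExtend_of_pos hx, kerExtend_of_pos hx', kerExtend_of_pos (by linarith),
        EReal.top_add_top]

theorem kerExtend_subgradient {g : E → EReal} {x₀ : E}
    (hsupp : ∀ x, g x ≠ ⊤ → ℓ (x - x₀) ≤ 0)
    (hsub₀ : ∀ v : LinearMap.ker ℓ, g x₀ + f₀ v ≤ g (x₀ + v)) (x : E) :
    g x₀ + kerExtend ℓ f₀ (x - x₀) ≤ g x := by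
  rcases lt_trichotomy (ℓ (x - x₀)) 0 with hx | hx | hx
  · rw [kerExtend_of_neg hx, EReal.add_bot]
    exact bot_le
  · simpa [kerExtend, hx] using hsub₀ ⟨x - x₀, hx⟩
  · have : g x = ⊤ := by_contra fun h => (hsupp x h).not_gt hx
    rw [this]
    exact le_top

end LinExt

theorem Convex.epigraph_comp_add_linearMap {E F : Type*} [AddCommGroup E] [Module ℝ E]
    [AddCommGroup F] [Module ℝ F] {g : E → EReal}
    (hconv : Convex ℝ {p : E × ℝ | g p.1 ≤ p.2}) (x₀ : E) (L : F →ₗ[ℝ] E) :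
    Convex ℝ {p : F × ℝ | g (x₀ + L p.1) ≤ p.2} :=
  hconv.affine_preimage ((AffineMap.const ℝ F x₀ + L.toAffineMap).prodMap (AffineMap.id ℝ ℝ))

section Epigraph

variable {E : Type*} {g : E → EReal} {x₀ : E} {r : ℝ}

theorem affineSpan_epigraph_eq_top [AddCommGroup E] [Module ℝ E] (hbot : ∀ x, g x ≠ ⊥)
    (hx₀ : g x₀ = r) (hspan : Submodule.span ℝ ((· - x₀) '' {x | g x ≠ ⊤}) = ⊤) :
    affineSpan ℝ {p : E × ℝ | g p.1 ≤ p.2} = ⊤ := by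
  have hmem : (x₀, r) ∈ {p : E × ℝ | g p.1 ≤ p.2} := hx₀.le
  rw [AffineSubspace.affineSpan_eq_top_iff_vectorSpan_eq_top_of_nonempty ℝ _ _ ⟨_, hmem⟩,
    eq_top_iff]
  set W := vectorSpan ℝ {p : E × ℝ | g p.1 ≤ p.2}
  have hvert : ((0 : E), (1 : ℝ)) ∈ W := by
    have hmem' : (x₀, r + 1) ∈ {p : E × ℝ | g p.1 ≤ p.2} := by
      simp only [Set.mem_ofPred_eq, hx₀]
      exact_mod_cast (lt_add_one r).le
    simpa using vsub_mem_vectorSpan ℝ hmem' hmem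
  have hhor : Submodule.span ℝ ((· - x₀) '' {x | g x ≠ ⊤}) ≤ W.comap (LinearMap.inl ℝ E ℝ) := by
    rw [Submodule.span_le]
    rintro _ ⟨x, hx, rfl⟩
    have hxt : (x, (g x).toReal) ∈ {p : E × ℝ | g p.1 ≤ p.2} := (EReal.coe_toReal hx (hbot x)).ge
    have := W.sub_mem (vsub_mem_vectorSpan ℝ hxt hmem) (W.smul_mem ((g x).toReal - r) hvert)
    simpa using this
  rintro ⟨v, t⟩ -
  have hv : v ∈ Submodule.span ℝ ((· - x₀) '' {x | g x ≠ ⊤}) := hspan ▸ Submodule.mem_top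
  simpa using W.add_mem (hhor hv) (W.smul_mem t hvert)

theorem notMem_interior_epigraph [TopologicalSpace E] (hx₀ : g x₀ = r) :
    (x₀, r) ∉ interior {p : E × ℝ | g p.1 ≤ p.2} := by
  intro h
  have hlim : Filter.Tendsto (fun t : ℝ => (x₀, t)) (nhdsWithin r (Set.Iio r)) (nhds (x₀, r)) :=
    tendsto_nhdsWithin_of_tendsto_nhds (by fun_prop : Continuous fun t : ℝ => (x₀, t)).continuousAt
  obtain ⟨t, hle, hlt⟩ :=
    ((hlim.eventually (mem_interior_iff_mem_nhds.1 h)).and self_mem_nhdsWithin).exists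
  have : (r : EReal) ≤ t := hx₀ ▸ hle
  exact (EReal.coe_le_coe_iff.1 this).not_gt hlt

variable [NormedAddCommGroup E] [NormedSpace ℝ E] [FiniteDimensional ℝ E]

theorem exists_supporting_epigraph_of_span_eq_top (hbot : ∀ x, g x ≠ ⊥)
    (hconv : Convex ℝ {p : E × ℝ | g p.1 ≤ p.2}) (hx₀ : g x₀ = r)
    (hspan : Submodule.span ℝ ((· - x₀) '' {x | g x ≠ ⊤}) = ⊤) :
    ∃ (A : E →ₗ[ℝ] ℝ) (s : ℝ), (A ≠ 0 ∨ s ≠ 0) ∧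
      ∀ x (t : ℝ), g x ≤ t → A (x - x₀) + (t - r) * s ≤ 0 := by
  have hint := hconv.interior_nonempty_iff_affineSpan_eq_top.2
    (affineSpan_epigraph_eq_top hbot hx₀ hspan)
  obtain ⟨φ, hφ0, hφ⟩ :=
    geometric_hahn_banach_of_nonempty_interior_point hconv (notMem_interior_epigraph hx₀) hint
  have hdec : ∀ (x : E) (t : ℝ), φ (x, t) = φ (x, 0) + t * φ (0, 1) := fun x t => by
    rw [← smul_eq_mul, ← map_smul, ← map_add]
    simp
  refine ⟨φ.toLinearMap.comp (LinearMap.inl ℝ E ℝ), φ (0, 1), ?_, fun x t hxt => ?_⟩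
  · by_contra! h
    refine hφ0 (ContinuousLinearMap.ext fun ⟨x, t⟩ => ?_)
    simpa [h.2] using (hdec x t).trans (congrArg (· + t * φ (0, 1)) (LinearMap.congr_fun h.1 x))
  · have := hφ (x, t) hxt
    rw [hdec, hdec x₀ r] at this
    simp only [LinearMap.coe_comp, ContinuousLinearMap.coe_coe, Function.comp_apply,
      LinearMap.inl_apply, map_sub]
    linarith

theorem exists_linear_subgradient_or_supporting (hbot : ∀ x, g x ≠ ⊥)
    (hconv : Convex ℝ {p : E × ℝ | g p.1 ≤ p.2}) (hx₀ : g x₀ = r) :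
    (∃ ℓ : E →ₗ[ℝ] ℝ, ∀ x, g x₀ + ℓ (x - x₀) ≤ g x) ∨
      ∃ ℓ : E →ₗ[ℝ] ℝ, ℓ ≠ 0 ∧ ∀ x, g x ≠ ⊤ → ℓ (x - x₀) ≤ 0 := by
  by_cases hspan : Submodule.span ℝ ((· - x₀) '' {x | g x ≠ ⊤}) = ⊤
  · obtain ⟨A, s, hAs, hA⟩ := exists_supporting_epigraph_of_span_eq_top hbot hconv hx₀ hspan
    have hs : s ≤ 0 := by simpa using hA x₀ (r + 1) (by rw [hx₀]; exact_mod_cast (lt_add_one r).le)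
    rcases hs.lt_or_eq with hs | rfl
    · refine Or.inl ⟨(-s)⁻¹ • A, fun x => ?_⟩
      obtain hx | hx := eq_or_ne (g x) ⊤
      · simp [hx]
      have hxt := hA x _ (EReal.coe_toReal hx (hbot x)).ge
      have : (-s)⁻¹ * A (x - x₀) ≤ (g x).toReal - r := by
        rw [inv_mul_le_iff₀ (neg_pos.2 hs)]
        linarith
      rw [← EReal.coe_toReal hx (hbot x), hx₀, ← EReal.coe_add, EReal.coe_le_coe_iff,
        LinearMap.smul_apply, smul_eq_mul]
      linarith
    · exact Or.inr ⟨A, by simpa using hAs, fun x hx => by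
        simpa using hA x _ (EReal.coe_toReal hx (hbot x)).ge⟩
  · obtain ⟨ℓ, hℓ, hker⟩ :=
      Submodule.exists_dual_map_eq_bot_of_lt_top (lt_top_iff_ne_top.2 hspan) inferInstance
    refine Or.inr ⟨ℓ, hℓ, fun x hx => le_of_eq ?_⟩
    have := Submodule.mem_map_of_mem (f := ℓ)
      (Submodule.subset_span (s := (· - x₀) '' {x | g x ≠ ⊤}) ⟨x, hx, rfl⟩)
    rwa [hker, Submodule.mem_bot] at this

end Epigraph

theorem exists_isLinExt_subgradient {E : Type*} [NormedAddCommGroup E] [NormedSpace ℝ E]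
    [FiniteDimensional ℝ E] {g : E → EReal} (hbot : ∀ x, g x ≠ ⊥)
    (hconv : Convex ℝ {p : E × ℝ | g p.1 ≤ p.2}) {x₀ : E} (hx₀ : g x₀ ≠ ⊤) :
    ∃ f : E → EReal, IsLinExt f ∧ ∀ x, g x₀ + f (x - x₀) ≤ g x := by
  induction hn : Module.finrank ℝ E using Nat.strong_induction_on generalizing E with
  | _ n IH =>
    rcases exists_linear_subgradient_or_supporting hbot hconv
        (EReal.coe_toReal hx₀ (hbot x₀)).symm with ⟨ℓ, hℓ⟩ | ⟨ℓ, hℓ0, hsupp⟩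
    · exact ⟨_, isLinExt_coe_linearMap ℓ, hℓ⟩
    have hrank : Module.finrank ℝ (LinearMap.ker ℓ) < n :=
      hn ▸ Submodule.finrank_lt (fun h => hℓ0 (LinearMap.ker_eq_top.1 h))
    obtain ⟨f₀, hf₀, hsub₀⟩ := IH _ hrank (g := fun v : LinearMap.ker ℓ => g (x₀ + v))
      (fun _ => hbot _) (hconv.epigraph_comp_add_linearMap x₀ (LinearMap.ker ℓ).subtype)
      (x₀ := 0) (by simpa using hx₀) rfl
    exact ⟨_, isLinExt_kerExtend hf₀,
      kerExtend_subgradient hsupp fun v => by simpa using hsub₀ v⟩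

theorem EReal.ne_top_of_add_le {a b c : EReal} (h : a + b ≤ c) (ha : a ≠ ⊥) (hc : c ≠ ⊤) :
    b ≠ ⊤ := by
  rintro rfl
  rw [EReal.add_top_of_ne_bot ha, top_le_iff] at h
  exact hc h

theorem Convex.epigraph_apply_combo_le {E : Type*} [AddCommGroup E] [Module ℝ E] {g : E → EReal}
    (hconv : Convex ℝ {p : E × ℝ | g p.1 ≤ p.2}) {a c : E} {ra rc ρ : ℝ} (ha : g a ≤ ra)
    (hc : g c ≤ rc) (hρ0 : 0 ≤ ρ) (hρ1 : ρ ≤ 1) :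
    g (ρ • a + (1 - ρ) • c) ≤ ((ρ * ra + (1 - ρ) * rc : ℝ) : EReal) := by
  simpa using hconv (show (a, ra) ∈ _ from ha) (show (c, rc) ∈ _ from hc) hρ0 (sub_nonneg.2 hρ1)
    (by ring)

namespace IsLinExt

variable {E : Type*} [AddCommGroup E] [Module ℝ E] {f g : E → EReal}

theorem exists_smul_eq_coe_mul (hf : IsLinExt f) {u : E} {s t : ℝ} (hs : 0 < s) (ht : 0 < t)
    (hsu : f (s • u) ≠ ⊤) (htu : f ((-t) • u) ≠ ⊤) :
    ∃ b : ℝ, ∀ α : ℝ, f (α • u) = ((α * b : ℝ) : EReal) := by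
  have hu_top : f u ≠ ⊤ := fun h => hsu (by rw [hf.1, h, EReal.coe_mul_top_of_pos hs])
  have hu_bot : f u ≠ ⊥ := fun h => htu (by rw [hf.1, h, EReal.coe_mul_bot_of_neg (by linarith)])
  exact ⟨(f u).toReal, fun α => by rw [hf.1, EReal.coe_mul, EReal.coe_toReal hu_top hu_bot]⟩

theorem subgradient_of_eq_add (hf : IsLinExt f) {m p : E} {b : ℝ}
    (hsub : ∀ x, g m + f (x - m) ≤ g x) (hb : f (p - m) = b) (hp : g p = g m + b) (x : E) :
    g p + f (x - p) ≤ g x := by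
  have hlegal : ¬((f (x - p) = ⊤ ∧ f (p - m) = ⊥) ∨ (f (x - p) = ⊥ ∧ f (p - m) = ⊤)) := by
    simp [hb]
  have hadd : f (x - m) = f (x - p) + b := by
    rw [← hb, ← hf.2 _ _ hlegal, sub_add_sub_cancel]
  rw [hp, add_assoc, add_comm (b : EReal), ← hadd]
  exact hsub x

variable {a c : E} {ρ ra rc : ℝ}

theorem subgradient_of_apply_combo_eq (hf : IsLinExt f) (hρ0 : 0 < ρ) (hρ1 : ρ < 1)
    (ha : g a = ra) (hc : g c = rc)
    (hm : g (ρ • a + (1 - ρ) • c) = ((ρ * ra + (1 - ρ) * rc : ℝ) : EReal))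
    (hsub : ∀ x, g (ρ • a + (1 - ρ) • c) + f (x - (ρ • a + (1 - ρ) • c)) ≤ g x) :
    (∀ x, g a + f (x - a) ≤ g x) ∧ ∀ x, g c + f (x - c) ≤ g x := by
  set m := ρ • a + (1 - ρ) • c
  have hma : a - m = (1 - ρ) • (a - c) := by module
  have hmc : c - m = (-ρ) • (a - c) := by module
  have hm_bot : g m ≠ ⊥ := hm ▸ EReal.coe_ne_bot _
  obtain ⟨b, hb⟩ := hf.exists_smul_eq_coe_mul (sub_pos.2 hρ1) hρ0
    (hma ▸ EReal.ne_top_of_add_le (hsub a) hm_bot (ha ▸ EReal.coe_ne_top _))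
    (hmc ▸ EReal.ne_top_of_add_le (hsub c) hm_bot (hc ▸ EReal.coe_ne_top _))
  have hsa := hsub a
  have hsc := hsub c
  rw [hma, hb, hm, ha, ← EReal.coe_add, EReal.coe_le_coe_iff] at hsa
  rw [hmc, hb, hm, hc, ← EReal.coe_add, EReal.coe_le_coe_iff] at hsc
  -- both slacks are nonnegative and their `ρ, 1 - ρ` combination is `0`
  have hslack_a := mul_nonneg hρ0.le (sub_nonneg.2 hsa)
  have hslack_c := mul_nonneg (sub_pos.2 hρ1).le (sub_nonneg.2 hsc)
  have hta : ra = ρ * ra + (1 - ρ) * rc + (1 - ρ) * b := by nlinarith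
  have htc : rc = ρ * ra + (1 - ρ) * rc + -ρ * b := by nlinarith
  refine ⟨hf.subgradient_of_eq_add hsub (hma ▸ hb _) ?_,
    hf.subgradient_of_eq_add hsub (hmc ▸ hb _) ?_⟩
  · rw [ha, hm, ← EReal.coe_add, ← hta]
  · rw [hc, hm, ← EReal.coe_add, ← htc]

theorem apply_combo_eq_of_subgradient (hf : IsLinExt f) (hbot : ∀ x, g x ≠ ⊥)
    (hconv : Convex ℝ {p : E × ℝ | g p.1 ≤ p.2}) (hρ0 : 0 < ρ) (hρ1 : ρ < 1)
    (ha : g a = ra) (hc : g c = rc) (hsa : ∀ x, g a + f (x - a) ≤ g x)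
    (hsc : ∀ x, g c + f (x - c) ≤ g x) :
    g (ρ • a + (1 - ρ) • c) = ((ρ * ra + (1 - ρ) * rc : ℝ) : EReal) := by
  set m := ρ • a + (1 - ρ) • c
  have hle := hconv.epigraph_apply_combo_le ha.le hc.le hρ0.le hρ1.le
  have hm_top : g m ≠ ⊤ := ne_top_of_le_ne_top (EReal.coe_ne_top _) hle
  obtain ⟨rm, hrm⟩ : ∃ rm : ℝ, g m = rm := ⟨_, (EReal.coe_toReal hm_top (hbot m)).symm⟩
  have ham : m - a = (1 - ρ) • (c - a) := by module
  have hcm : m - c = (-ρ) • (c - a) := by module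
  obtain ⟨b, hb⟩ := hf.exists_smul_eq_coe_mul (sub_pos.2 hρ1) hρ0
    (ham ▸ EReal.ne_top_of_add_le (hsa m) (hbot a) hm_top)
    (hcm ▸ EReal.ne_top_of_add_le (hsc m) (hbot c) hm_top)
  have hsam := hsa m
  have hscm := hsc m
  rw [ham, hb, hrm, ha, ← EReal.coe_add, EReal.coe_le_coe_iff] at hsam
  rw [hcm, hb, hrm, hc, ← EReal.coe_add, EReal.coe_le_coe_iff] at hscm
  rw [hrm, EReal.coe_le_coe_iff] at hle
  rw [hrm, EReal.coe_eq_coe_iff]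
  nlinarith [mul_le_mul_of_nonneg_left hsam hρ0.le,
    mul_le_mul_of_nonneg_left hscm (sub_pos.2 hρ1).le]

end IsLinExt

theorem stmt_15_general (d : ℕ) (g : (Fin d → ℝ) → EReal) (hbot : ∀ x, g x ≠ ⊥)
    (hconv : Convex ℝ {p : (Fin d → ℝ) × ℝ | g p.1 ≤ (p.2 : EReal)})
    (P : Set (Fin d → ℝ)) (hPdom : ∀ x ∈ P, g x ≠ ⊤) :
    -- not strictly convex on P → two distinct points of P share an extended subgradient
    ((¬ ∀ x ∈ P, ∀ x' ∈ P, x ≠ x' → ∀ ρ : ℝ, 0 < ρ → ρ < 1 →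
        g (ρ • x + (1 - ρ) • x') < (ρ : EReal) * g x + ((1 - ρ : ℝ) : EReal) * g x') →
      ∃ a ∈ P, ∃ c ∈ P, a ≠ c ∧ ∃ f : (Fin d → ℝ) → EReal, IsLinExt f ∧
        (∀ x, g a + f (x - a) ≤ g x) ∧ (∀ x, g c + f (x - c) ≤ g x)) ∧
    -- conversely, a shared extended subgradient forces affineness along the segment
    (∀ a ∈ P, ∀ c ∈ P, a ≠ c → ∀ f : (Fin d → ℝ) → EReal, IsLinExt f →
      (∀ x, g a + f (x - a) ≤ g x) → (∀ x, g c + f (x - c) ≤ g x) →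
      ∀ ρ : ℝ, 0 < ρ → ρ < 1 →
        g (ρ • a + (1 - ρ) • c) = (ρ : EReal) * g a + ((1 - ρ : ℝ) : EReal) * g c) := by
  have hreal : ∀ x ∈ P, ∃ r : ℝ, g x = r := fun x hx =>
    ⟨_, (EReal.coe_toReal (hPdom x hx) (hbot x)).symm⟩
  refine ⟨fun hns => ?_, fun a ha c hc _ f hf hsa hsc ρ hρ0 hρ1 => ?_⟩
  · push Not at hns
    obtain ⟨a, ha, c, hc, hac, ρ, hρ0, hρ1, hge⟩ := hns
    obtain ⟨ra, hra⟩ := hreal a ha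
    obtain ⟨rc, hrc⟩ := hreal c hc
    rw [hra, hrc] at hge
    norm_cast at hge
    have hm := le_antisymm (hconv.epigraph_apply_combo_le hra.le hrc.le hρ0.le hρ1.le) hge
    obtain ⟨f, hf, hsub⟩ := exists_isLinExt_subgradient hbot hconv (hm ▸ EReal.coe_ne_top _)
    exact ⟨a, ha, c, hc, hac, f, hf, hf.subgradient_of_apply_combo_eq hρ0 hρ1 hra hrc hm hsub⟩
  · obtain ⟨ra, hra⟩ := hreal a ha
    obtain ⟨rc, hrc⟩ := hreal c hc
    rw [hf.apply_combo_eq_of_subgradient hbot hconv hρ0 hρ1 hra hrc hsa hsc, hra, hrc]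
    norm_cast

theorem stmt_15 (d : ℕ) (g : (Fin d → ℝ) → EReal) (hbot : ∀ x, g x ≠ ⊥)
    (hconv : Convex ℝ {p : (Fin d → ℝ) × ℝ | g p.1 ≤ (p.2 : EReal)})
    (P : Set (Fin d → ℝ)) (hP : Convex ℝ P) (hPdom : ∀ x ∈ P, g x ≠ ⊤) :
    -- not strictly convex on P → two distinct points of P share an extended subgradient
    ((¬ ∀ x ∈ P, ∀ x' ∈ P, x ≠ x' → ∀ ρ : ℝ, 0 < ρ → ρ < 1 →
        g (ρ • x + (1 - ρ) • x') < (ρ : EReal) * g x + ((1 - ρ : ℝ) : EReal) * g x') →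
      ∃ a ∈ P, ∃ c ∈ P, a ≠ c ∧ ∃ f : (Fin d → ℝ) → EReal, IsLinExt f ∧
        (∀ x, g a + f (x - a) ≤ g x) ∧ (∀ x, g c + f (x - c) ≤ g x)) ∧
    -- conversely, a shared extended subgradient forces affineness along the segment
    (∀ a ∈ P, ∀ c ∈ P, a ≠ c → ∀ f : (Fin d → ℝ) → EReal, IsLinExt f →
      (∀ x, g a + f (x - a) ≤ g x) → (∀ x, g c + f (x - c) ≤ g x) →
      ∀ ρ : ℝ, 0 < ρ → ρ < 1 →
        g (ρ • a + (1 - ρ) • c) = (ρ : EReal) * g a + ((1 - ρ : ℝ) : EReal) * g c) :=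
  stmt_15_general d g hbot hconv P hPdom
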